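/- arXiv:2106.09836 — 2 statements merged into one kernel-verified Lean document; each statement's English description precedes it below -/
import Mathlib

section
/- Let A be an n×m matrix of nonnegative reals. Let p_1, q_1 be lattice points and k a positive integer, and set p_i = p_1 + (i-1)(1,1) and q_i = q_1 + (i-1)(1,1) for i = 1,…,k. Then the maximal total weight of k pairwise vertex-disjoint directed lattice paths from p_i to q_i (i = 1,…,k) equals the maximum over all (not necessarily disjoint) k-tuples of directed paths π_i from p_i to q_i of the sum of A_v over v in the union ⋃π_i, counting each vertex once. -/
/-- A directed lattice path from `p` to `q`: a nonempty list of lattice points starting at `p`,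
ending at `q`, each step being `(1,0)` (right) or `(0,-1)` (down). -/
def IsDirPath (π : List (ℤ × ℤ)) (p q : ℤ × ℤ) : Prop :=
  π ≠ [] ∧ π.head? = some p ∧ π.getLast? = some q ∧
  ∀ i : ℕ, i + 1 < π.length → π[i + 1]! - π[i]! = (1, 0) ∨ π[i + 1]! - π[i]! = (0, -1)

/-- The paths of a tuple are pairwise vertex-disjoint. -/
def DisjTuple {k : ℕ} (π : Fin k → List (ℤ × ℤ)) : Prop :=
  ∀ i j : Fin k, i ≠ j → ∀ v ∈ (π i).toFinset, v ∉ (π j).toFinset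

/-- Total weight of the union of the vertices of a tuple of paths, each vertex counted once. -/
noncomputable def pathsUnionWeight (A : ℤ × ℤ → ℝ) {k : ℕ} (π : Fin k → List (ℤ × ℤ)) : ℝ :=
  ∑ v ∈ Finset.univ.biUnion (fun j => (π j).toFinset), A v

def pathOf (D0 : ℤ) (L : ℕ) (f : ℕ → ℤ) : List (ℤ × ℤ) :=
  (List.range (L + 1)).map fun t => (f t, f t - D0 - (t : ℤ))

lemma pathOf_length (D0 : ℤ) (L : ℕ) (f : ℕ → ℤ) : (pathOf D0 L f).length = L + 1 := by
  simp [pathOf]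

lemma pathOf_getElem (D0 : ℤ) (L : ℕ) (f : ℕ → ℤ) (t : ℕ) (h : t < (pathOf D0 L f).length) :
    (pathOf D0 L f)[t] = (f t, f t - D0 - (t : ℤ)) := by
  simp [pathOf]

lemma pathOf_getElemBang (D0 : ℤ) (L : ℕ) (f : ℕ → ℤ) (t : ℕ) (h : t ≤ L) :
    (pathOf D0 L f)[t]! = (f t, f t - D0 - (t : ℤ)) := by
  have hl : t < (pathOf D0 L f).length := by rw [pathOf_length]; omega
  rw [getElem!_pos (pathOf D0 L f) t hl, pathOf_getElem]

lemma mem_pathOf {v : ℤ × ℤ} (D0 : ℤ) (L : ℕ) (f : ℕ → ℤ) :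
    v ∈ pathOf D0 L f ↔ ∃ t, t ≤ L ∧ v = (f t, f t - D0 - (t : ℤ)) := by
  simp only [pathOf, List.mem_map, List.mem_range]
  constructor
  · rintro ⟨t, ht, rfl⟩; exact ⟨t, by omega, rfl⟩
  · rintro ⟨t, ht, rfl⟩; exact ⟨t, by omega, rfl⟩

lemma isDirPath_pathOf (D0 : ℤ) (L : ℕ) (f : ℕ → ℤ) (p q : ℤ × ℤ)
    (hstep : ∀ t < L, f (t + 1) = f t ∨ f (t + 1) = f t + 1)
    (hp : p = (f 0, f 0 - D0)) (hq : q = (f L, f L - D0 - (L : ℤ))) :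
    IsDirPath (pathOf D0 L f) p q := by
  have hlen := pathOf_length D0 L f
  refine ⟨List.ne_nil_of_length_pos (by omega), ?_, ?_, ?_⟩
  · rw [List.head?_eq_getElem?, List.getElem?_eq_getElem (by omega), pathOf_getElem]
    simp [hp]
  · rw [List.getLast?_eq_getElem?]
    have h2 : (pathOf D0 L f).length - 1 = L := by omega
    rw [h2, List.getElem?_eq_getElem (by omega), pathOf_getElem]
    simp [hq]
  · intro i hi
    rw [hlen] at hi
    rw [pathOf_getElemBang D0 L f (i+1) (by omega), pathOf_getElemBang D0 L f i (by omega)]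
    rcases hstep i (by omega) with h | h
    · right
      show (f (i+1) - f i, (f (i+1) - D0 - ((i:ℕ)+1:ℕ)) - (f i - D0 - (i:ℤ))) = (0, -1)
      simp only [Prod.mk.injEq]; push_cast; omega
    · left
      show (f (i+1) - f i, (f (i+1) - D0 - ((i:ℕ)+1:ℕ)) - (f i - D0 - (i:ℤ))) = (1, 0)
      simp only [Prod.mk.injEq]; push_cast; omega

lemma exists_pathOf (π : List (ℤ × ℤ)) (p q : ℤ × ℤ) (h : IsDirPath π p q) :
    ∃ (L : ℕ) (f : ℕ → ℤ), π = pathOf (p.1 - p.2) L f ∧ ((L : ℤ) = q.1 - q.2 - (p.1 - p.2)) ∧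
      (∀ t < L, f (t + 1) = f t ∨ f (t + 1) = f t + 1) ∧ f 0 = p.1 ∧ f L = q.1 := by
  obtain ⟨hne, hhead, hlast, hstep⟩ := h
  have hpos : 0 < π.length := List.length_pos_iff.mpr hne
  set f : ℕ → ℤ := fun t => (π[t]!).1 with hf
  set D0 := p.1 - p.2 with hD0
  have hp0 : π[0]! = p := by
    have h0 : π[0]? = some p := by rw [← List.head?_eq_getElem?]; exact hhead
    rw [List.getElem?_eq_getElem hpos] at h0
    rw [getElem!_pos π 0 hpos]
    exact Option.some_injective _ h0
  have key : ∀ t < π.length, π[t]! = (f t, f t - D0 - (t : ℤ)) := by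
    intro t
    induction t with
    | zero =>
      intro _
      rw [hp0]
      have hf0 : f 0 = p.1 := by rw [hf]; simp [hp0]
      rw [hf0, hD0]
      simp
    | succ n ih =>
      intro hn
      have ihn := ih (by omega)
      have e1 : (π[n]!).1 = f n := by rw [ihn]
      have e2 : (π[n]!).2 = f n - D0 - (n:ℤ) := by rw [ihn]
      have hfn1 : f (n + 1) = (π[n+1]!).1 := rfl
      have hsplit : π[n+1]! = ((π[n+1]!).1, (π[n+1]!).2) := rfl
      rcases hstep n hn with hd | hd
      · have h1 : (π[n+1]!).1 - (π[n]!).1 = 1 := congrArg Prod.fst hd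
        have h2 : (π[n+1]!).2 - (π[n]!).2 = 0 := congrArg Prod.snd hd
        rw [hsplit, ← hfn1]
        simp only [Prod.mk.injEq]
        refine ⟨trivial, ?_⟩
        rw [hfn1] at *
        push_cast
        omega
      · have h1 : (π[n+1]!).1 - (π[n]!).1 = 0 := congrArg Prod.fst hd
        have h2 : (π[n+1]!).2 - (π[n]!).2 = -1 := congrArg Prod.snd hd
        rw [hsplit, ← hfn1]
        simp only [Prod.mk.injEq]
        refine ⟨trivial, ?_⟩
        rw [hfn1] at *
        push_cast
        omega
  set L := π.length - 1 with hLdef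
  have hqlast : π[L]! = q := by
    have h0 : π[π.length - 1]? = some q := by rw [← List.getLast?_eq_getElem?]; exact hlast
    rw [List.getElem?_eq_getElem (by omega)] at h0
    rw [getElem!_pos π L (by omega)]
    exact Option.some_injective _ h0
  have hkeyL := key L (by omega)
  have hq1 : f L = q.1 := by rw [hqlast] at hkeyL; rw [congrArg Prod.fst hkeyL]
  have hq2 : q.2 = f L - D0 - (L:ℤ) := by
    rw [hqlast] at hkeyL; exact congrArg Prod.snd hkeyL
  have hLval : (L : ℤ) = q.1 - q.2 - D0 := by omega
  refine ⟨L, f, ?_, hLval, ?_, ?_, hq1⟩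
  · apply List.ext_getElem (by rw [pathOf_length]; omega)
    intro n h1 h2
    rw [pathOf_getElem]
    rw [← getElem!_pos π n h1]
    exact key n h1
  · intro t ht
    rcases hstep t (by omega) with hd | hd
    · have h1 : (π[t+1]!).1 - (π[t]!).1 = 1 := congrArg Prod.fst hd
      right; show (π[t+1]!).1 = (π[t]!).1 + 1; omega
    · have h1 : (π[t+1]!).1 - (π[t]!).1 = 0 := congrArg Prod.fst hd
      left; show (π[t+1]!).1 = (π[t]!).1; omega
  · show (π[0]!).1 = p.1
    rw [hp0]

/-- j-th element of a sorted ≤-list is ≤ v iff more than j elements are ≤ v. -/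
lemma sorted_getElem_le_iff : ∀ (l : List ℤ), l.Pairwise (· ≤ ·) →
    ∀ (j : ℕ) (hj : j < l.length) (v : ℤ),
    (l[j] ≤ v ↔ j < l.countP (fun a => decide (a ≤ v))) := by
  intro l
  induction l with
  | nil => intro _ j hj; simp at hj
  | cons a l ih =>
    intro hs j hj v
    rw [List.pairwise_cons] at hs
    obtain ⟨ha, hs⟩ := hs
    rw [List.countP_cons]
    by_cases hav : a ≤ v
    · rw [decide_eq_true hav]
      simp only [if_true]
      cases j with
      | zero => simpa using by omega
      | succ n =>
        have hn : n < l.length := by simpa using hj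
        have := ih hs n hn v
        simp only [List.getElem_cons_succ]
        omega
    · have hz : l.countP (fun a => decide (a ≤ v)) = 0 := by
        rw [List.countP_eq_zero]
        intro b hb
        simp only [decide_eq_true_eq]
        have := ha b hb
        omega
      rw [decide_eq_false hav, hz]
      simp only [Bool.false_eq_true, if_false]
      cases j with
      | zero => simpa using by omega
      | succ n =>
        have hn : n < l.length := by simpa using hj
        simp only [List.getElem_cons_succ]
        constructor
        · intro hle
          exfalso
          have hmem : l[n] ∈ l := List.getElem_mem hn
          have := ha _ hmem
          omega
        · omega

lemma countP_ofFn_le {k : ℕ} (x y : Fin k → ℤ) (P Q : ℤ → Bool)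
    (h : ∀ i, P (x i) → Q (y i)) : (List.ofFn x).countP P ≤ (List.ofFn y).countP Q := by
  induction k with
  | zero => simp
  | succ n ih =>
    rw [List.ofFn_succ, List.ofFn_succ, List.countP_cons, List.countP_cons]
    have h2 := ih (fun i => x i.succ) (fun i => y i.succ) (fun i => h i.succ)
    have h0 := h 0
    by_cases hx : P (x 0) = true
    · have hy := h0 hx
      simp only [hx, hy, if_true]
      omega
    · have hx' : P (x 0) = false := by simpa using hx
      simp only [hx', Bool.false_eq_true, if_false]
      by_cases hy : Q (y 0) = true
      · simp only [hy, if_true]; omega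
      · simp only [hy, Bool.false_eq_true, if_false]; omega

noncomputable def sortedList {k : ℕ} (F : Fin k → ℤ) : List ℤ :=
  Multiset.sort (↑(List.ofFn F)) (· ≤ ·)

noncomputable def sVal {k : ℕ} (F : Fin k → ℤ) (j : ℕ) : ℤ := (sortedList F)[j]!

lemma sortedList_perm {k : ℕ} (F : Fin k → ℤ) : (sortedList F).Perm (List.ofFn F) := by
  have := Multiset.sort_eq (α := ℤ) (↑(List.ofFn F)) (· ≤ ·)
  exact Multiset.coe_eq_coe.mp this

lemma sortedList_length {k : ℕ} (F : Fin k → ℤ) : (sortedList F).length = k := by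
  rw [(sortedList_perm F).length_eq, List.length_ofFn]

lemma sortedList_sorted {k : ℕ} (F : Fin k → ℤ) : (sortedList F).Pairwise (· ≤ ·) :=
  Multiset.pairwise_sort _ _

lemma sVal_le_iff {k : ℕ} (F : Fin k → ℤ) (j : ℕ) (hj : j < k) (v : ℤ) :
    sVal F j ≤ v ↔ j < (List.ofFn F).countP (fun a => decide (a ≤ v)) := by
  have hj' : j < (sortedList F).length := by rw [sortedList_length]; exact hj
  rw [sVal, getElem!_pos (sortedList F) j hj', sorted_getElem_le_iff _ (sortedList_sorted F) j hj' v,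
    (sortedList_perm F).countP_eq]

lemma sVal_mono {k : ℕ} (F : Fin k → ℤ) (i j : ℕ) (hij : i ≤ j) (hj : j < k) :
    sVal F i ≤ sVal F j := by
  rcases eq_or_lt_of_le hij with rfl | hlt
  · exact le_refl _
  · have hi' : i < (sortedList F).length := by rw [sortedList_length]; omega
    have hj' : j < (sortedList F).length := by rw [sortedList_length]; exact hj
    have := (List.pairwise_iff_getElem.mp (sortedList_sorted F)) i j hi' hj' hlt
    rw [sVal, sVal, getElem!_pos (sortedList F) i hi', getElem!_pos (sortedList F) j hj']
    exact this

lemma sVal_mem {k : ℕ} (F : Fin k → ℤ) (j : ℕ) (hj : j < k) : ∃ i : Fin k, F i = sVal F j := by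
  have hj' : j < (sortedList F).length := by rw [sortedList_length]; exact hj
  have hm : sVal F j ∈ sortedList F := by
    rw [sVal, getElem!_pos (sortedList F) j hj']; exact List.getElem_mem hj'
  have := (sortedList_perm F).mem_iff.mp hm
  rw [List.mem_ofFn] at this
  obtain ⟨i, hi⟩ := this
  exact ⟨i, hi⟩

lemma mem_sVal {k : ℕ} (F : Fin k → ℤ) (i : Fin k) : ∃ j, j < k ∧ sVal F j = F i := by
  have hm : F i ∈ List.ofFn F := by rw [List.mem_ofFn]; exact ⟨i, rfl⟩
  have hm2 : F i ∈ sortedList F := (sortedList_perm F).mem_iff.mpr hm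
  obtain ⟨j, hj, he⟩ := List.mem_iff_getElem.mp hm2
  refine ⟨j, by rw [sortedList_length] at hj; exact hj, ?_⟩
  rw [sVal, getElem!_pos (sortedList F) j hj, he]

lemma sVal_step {k : ℕ} (x y : Fin k → ℤ) (h : ∀ i, y i = x i ∨ y i = x i + 1)
    (j : ℕ) (hj : j < k) : sVal y j = sVal x j ∨ sVal y j = sVal x j + 1 := by
  have h1 : sVal x j ≤ sVal y j := by
    by_contra hc
    push_neg at hc
    have hy : sVal y j ≤ sVal y j := le_refl _
    rw [sVal_le_iff y j hj] at hy
    have hcount : (List.ofFn y).countP (fun a => decide (a ≤ sVal y j)) ≤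
        (List.ofFn x).countP (fun a => decide (a ≤ sVal y j)) := by
      apply countP_ofFn_le
      intro i
      simp only [decide_eq_true_eq]
      have := h i
      omega
    have : sVal x j ≤ sVal y j := by
      rw [sVal_le_iff x j hj]; omega
    omega
  have h2 : sVal y j ≤ sVal x j + 1 := by
    have hx : sVal x j ≤ sVal x j := le_refl _
    rw [sVal_le_iff x j hj] at hx
    have hcount : (List.ofFn x).countP (fun a => decide (a ≤ sVal x j)) ≤
        (List.ofFn y).countP (fun a => decide (a ≤ sVal x j + 1)) := by
      apply countP_ofFn_le
      intro i
      simp only [decide_eq_true_eq]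
      have := h i
      omega
    rw [sVal_le_iff y j hj]
    omega
  omega

lemma sVal_arith {k : ℕ} (F : Fin k → ℤ) (a : ℤ) (hF : ∀ i : Fin k, F i = a + (i : ℤ))
    (j : ℕ) (hj : j < k) : sVal F j = a + j := by
  have hsorted : (List.ofFn F).Pairwise (· ≤ ·) := by
    rw [List.pairwise_iff_getElem]
    intro i j hi hj hij
    rw [List.getElem_ofFn, List.getElem_ofFn, hF, hF]
    simp only [add_le_add_iff_left]
    exact_mod_cast le_of_lt hij
  have heq : sortedList F = List.ofFn F :=
    (sortedList_perm F).eq_of_pairwise' (sortedList_sorted F) hsorted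
  have hj' : j < (sortedList F).length := by rw [sortedList_length]; exact hj
  rw [sVal, getElem!_pos (sortedList F) j hj']
  have hj2 : j < (List.ofFn F).length := by simpa using hj
  have : (sortedList F)[j]'hj' = (List.ofFn F)[j]'hj2 := by
    congr 1
  rw [this, List.getElem_ofFn, hF]

def Gfun (s : ℕ → ℕ → ℤ) : ℕ → ℕ → ℤ
  | 0, t => s 0 t
  | (j+1), t => max (Gfun s j t + 1) (s (j+1) t)

lemma Gfun_succ (s : ℕ → ℕ → ℤ) (j t : ℕ) :
    Gfun s (j+1) t = max (Gfun s j t + 1) (s (j+1) t) := rfl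

lemma Gfun_strict (s : ℕ → ℕ → ℤ) (t : ℕ) : ∀ i j : ℕ, i < j → Gfun s i t < Gfun s j t := by
  intro i j
  induction j with
  | zero => omega
  | succ n ih =>
    intro hij
    rw [Gfun_succ]
    rcases Nat.lt_succ_iff_lt_or_eq.mp hij with h | rfl
    · have := ih h; omega
    · omega

lemma Gfun_step (s : ℕ → ℕ → ℤ) (t : ℕ) (j : ℕ)
    (hs : ∀ j' ≤ j, s j' (t+1) = s j' t ∨ s j' (t+1) = s j' t + 1) :
    Gfun s j (t+1) = Gfun s j t ∨ Gfun s j (t+1) = Gfun s j t + 1 := by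
  induction j with
  | zero => exact hs 0 le_rfl
  | succ n ih =>
    have h1 := ih (fun j' hj' => hs j' (by omega))
    have h2 := hs (n+1) le_rfl
    rw [Gfun_succ, Gfun_succ]
    omega

lemma Gfun_base (s : ℕ → ℕ → ℤ) (t : ℕ) (a : ℤ) (j : ℕ) (h : ∀ l ≤ j, s l t = a + l) :
    Gfun s j t = a + j := by
  induction j with
  | zero => simpa [Gfun] using h 0 le_rfl
  | succ n ih =>
    have h1 := ih (fun l hl => h l (by omega))
    have h2 := h (n+1) le_rfl
    rw [Gfun_succ, h1, h2]
    push_cast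
    omega

lemma Gfun_hit (s : ℕ → ℕ → ℤ) (t : ℕ) (v : ℤ) :
    ∀ m : ℕ, (∀ l ≤ m, s l t ≤ v) → v ≤ Gfun s m t → ∃ l ≤ m, Gfun s l t = v := by
  intro m
  induction m with
  | zero =>
    intro h1 h2
    exact ⟨0, le_rfl, le_antisymm (h1 0 le_rfl) h2⟩
  | succ n ih =>
    intro h1 h2
    by_cases hc : v ≤ Gfun s n t
    · obtain ⟨l, hl, he⟩ := ih (fun l hl => h1 l (by omega)) hc
      exact ⟨l, by omega, he⟩
    · refine ⟨n+1, le_rfl, ?_⟩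
      have hs := h1 (n+1) le_rfl
      rw [Gfun_succ] at h2 ⊢
      omega

lemma Gfun_cover (s : ℕ → ℕ → ℤ) (t : ℕ) (j : ℕ)
    (hmono : ∀ l m : ℕ, l ≤ m → m ≤ j → s l t ≤ s m t) :
    ∃ l ≤ j, Gfun s l t = s j t := by
  cases j with
  | zero => exact ⟨0, le_rfl, rfl⟩
  | succ n =>
    by_cases hc : Gfun s n t + 1 ≤ s (n+1) t
    · exact ⟨n+1, le_rfl, by rw [Gfun_succ]; omega⟩
    · have hGa : s (n+1) t ≤ Gfun s n t := by omega
      obtain ⟨l, hl, he⟩ := Gfun_hit s t (s (n+1) t) n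
        (fun l hl => hmono l (n+1) (by omega) le_rfl) hGa
      exact ⟨l, by omega, he⟩

lemma main_construct {k : ℕ} (L : ℕ) (f : Fin k → ℕ → ℤ)
    (hstep : ∀ j : Fin k, ∀ t < L, f j (t + 1) = f j t ∨ f j (t + 1) = f j t + 1)
    (a0 b0 : ℤ) (h0 : ∀ j : Fin k, f j 0 = a0 + (j : ℤ))
    (hLend : ∀ j : Fin k, f j L = b0 + (j : ℤ)) :
    ∃ g : Fin k → ℕ → ℤ,
      (∀ j : Fin k, ∀ t < L, g j (t + 1) = g j t ∨ g j (t + 1) = g j t + 1) ∧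
      (∀ j : Fin k, g j 0 = a0 + (j : ℤ)) ∧ (∀ j : Fin k, g j L = b0 + (j : ℤ)) ∧
      (∀ i j : Fin k, i ≠ j → ∀ t, g i t ≠ g j t) ∧
      (∀ (j : Fin k) (t : ℕ), ∃ i : Fin k, g i t = f j t) := by
  set s : ℕ → ℕ → ℤ := fun j t => sVal (fun i => f i t) j with hs
  refine ⟨fun j t => Gfun s (j : ℕ) t, ?_, ?_, ?_, ?_, ?_⟩
  · intro j t ht
    apply Gfun_step
    intro j' hj'
    exact sVal_step (fun i => f i t) (fun i => f i (t + 1))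
      (fun i => hstep i t ht) j' (lt_of_le_of_lt hj' j.isLt)
  · intro j
    apply Gfun_base
    intro l hl
    exact sVal_arith (fun i => f i 0) a0 h0 l (lt_of_le_of_lt hl j.isLt)
  · intro j
    apply Gfun_base
    intro l hl
    exact sVal_arith (fun i => f i L) b0 hLend l (lt_of_le_of_lt hl j.isLt)
  · intro i j hij t
    have hne : (i : ℕ) ≠ (j : ℕ) := fun h => hij (Fin.ext h)
    rcases lt_or_gt_of_ne hne with h | h
    · exact ne_of_lt (Gfun_strict s t _ _ h)
    · exact (ne_of_lt (Gfun_strict s t _ _ h)).symm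
  · intro j t
    obtain ⟨m, hm, hms⟩ := mem_sVal (fun i => f i t) j
    obtain ⟨l, hl, he⟩ := Gfun_cover s t m
      (fun l' m' hlm hmj => sVal_mono (fun i => f i t) l' m' hlm (lt_of_le_of_lt hmj hm))
    exact ⟨⟨l, lt_of_le_of_lt hl hm⟩, by show Gfun s l t = f j t; rw [he]; exact hms⟩

lemma step_bound (L : ℕ) (f : ℕ → ℤ)
    (hstep : ∀ t < L, f (t + 1) = f t ∨ f (t + 1) = f t + 1) :
    ∀ t' ≤ L, ∀ t ≤ t', f t ≤ f t' ∧ f t' ≤ f t + (t' : ℤ) - (t : ℤ) := by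
  intro t'
  induction t' with
  | zero =>
    intro _ t ht
    have : t = 0 := by omega
    subst this
    simp
  | succ n ih =>
    intro hn t ht
    rcases Nat.lt_succ_iff_lt_or_eq.mp (Nat.lt_succ_of_le ht) with h | rfl
    · have h1 := ih (by omega) t (by omega)
      have h2 := hstep n (by omega)
      push_cast
      omega
    · constructor
      · exact le_refl _
      · push_cast; omega

lemma disjTuple_pathOf {k : ℕ} (D0 : ℤ) (L : ℕ) (g : Fin k → ℕ → ℤ)
    (hg : ∀ i j : Fin k, i ≠ j → ∀ t, g i t ≠ g j t) :
    DisjTuple (fun j => pathOf D0 L (g j)) := by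
  intro i j hij v hv hv2
  simp only [List.mem_toFinset] at hv hv2
  rw [mem_pathOf] at hv hv2
  obtain ⟨t, ht, rfl⟩ := hv
  obtain ⟨t', ht', heq⟩ := hv2
  have e1 : g i t = g j t' := congrArg Prod.fst heq
  have e2 : g i t - D0 - (t : ℤ) = g j t' - D0 - (t' : ℤ) := congrArg Prod.snd heq
  have : (t : ℤ) = (t' : ℤ) := by omega
  have htt : t = t' := by exact_mod_cast this
  subst htt
  exact hg i j hij t e1

theorem stmt12 (A : ℤ × ℤ → ℝ) (hA : ∀ v, 0 ≤ A v) (k : ℕ) (hk : 1 ≤ k)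
    (p q : Fin k → ℤ × ℤ)
    (hstairp : ∀ j : Fin k, p j = p ⟨0, hk⟩ + ((j : ℤ), (j : ℤ)))
    (hstairq : ∀ j : Fin k, q j = q ⟨0, hk⟩ + ((j : ℤ), (j : ℤ)))
    (h1 : (p ⟨0, hk⟩).1 ≤ (q ⟨0, hk⟩).1) (h2 : (q ⟨0, hk⟩).2 ≤ (p ⟨0, hk⟩).2) :
    sSup {w : ℝ | ∃ π : Fin k → List (ℤ × ℤ),
        (∀ j, IsDirPath (π j) (p j) (q j)) ∧ DisjTuple π ∧ w = pathsUnionWeight A π}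
      = sSup {w : ℝ | ∃ π : Fin k → List (ℤ × ℤ),
        (∀ j, IsDirPath (π j) (p j) (q j)) ∧ w = pathsUnionWeight A π} := by
  classical
  set a := p ⟨0, hk⟩ with ha
  set b := q ⟨0, hk⟩ with hb
  set D0 : ℤ := a.1 - a.2 with hD0
  have hLnn : 0 ≤ b.1 - b.2 - D0 := by omega
  set L : ℕ := (b.1 - b.2 - D0).toNat with hLdef
  have hL : (L : ℤ) = b.1 - b.2 - D0 := Int.toNat_of_nonneg hLnn
  have hpj : ∀ j : Fin k, p j = (a.1 + (j : ℤ), a.2 + (j : ℤ)) := by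
    intro j
    rw [hstairp j]
    exact Prod.ext rfl rfl
  have hqj : ∀ j : Fin k, q j = (b.1 + (j : ℤ), b.2 + (j : ℤ)) := by
    intro j
    rw [hstairq j]
    exact Prod.ext rfl rfl
  -- extraction
  have extract : ∀ (π : Fin k → List (ℤ × ℤ)), (∀ j, IsDirPath (π j) (p j) (q j)) →
      ∃ F : Fin k → ℕ → ℤ, (∀ j, π j = pathOf D0 L (F j)) ∧
        (∀ j, ∀ t < L, F j (t + 1) = F j t ∨ F j (t + 1) = F j t + 1) ∧
        (∀ j, F j 0 = a.1 + (j : ℤ)) ∧ (∀ j, F j L = b.1 + (j : ℤ)) := by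
    intro π hπ
    have h' : ∀ j, ∃ F : ℕ → ℤ, π j = pathOf D0 L F ∧
        (∀ t < L, F (t + 1) = F t ∨ F (t + 1) = F t + 1) ∧
        F 0 = a.1 + (j : ℤ) ∧ F L = b.1 + (j : ℤ) := by
      intro j
      obtain ⟨Lj, F, hppath, hLj, hstepF, hF0, hFL⟩ := exists_pathOf (π j) (p j) (q j) (hπ j)
      have e1 : (p j).1 - (p j).2 = D0 := by
        rw [hpj j]; show (a.1 + (j:ℤ)) - (a.2 + (j:ℤ)) = D0; omega
      have e2 : (q j).1 - (q j).2 = b.1 - b.2 := by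
        rw [hqj j]; show (b.1 + (j:ℤ)) - (b.2 + (j:ℤ)) = b.1 - b.2; omega
      have hLjL : Lj = L := by
        have hcast : (Lj : ℤ) = (L : ℤ) := by rw [hLj, e1, e2, hL]
        exact_mod_cast hcast
      subst hLjL
      rw [e1] at hppath
      refine ⟨F, hppath, hstepF, ?_, ?_⟩
      · rw [hF0, hpj j]
      · rw [hFL, hqj j]
    choose F hh1 hh2 hh3 hh4 using h'
    exact ⟨F, hh1, hh2, hh3, hh4⟩
  -- untangling
  have untangle : ∀ (π : Fin k → List (ℤ × ℤ)), (∀ j, IsDirPath (π j) (p j) (q j)) →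
      ∃ π' : Fin k → List (ℤ × ℤ), (∀ j, IsDirPath (π' j) (p j) (q j)) ∧ DisjTuple π' ∧
        pathsUnionWeight A π ≤ pathsUnionWeight A π' := by
    intro π hπ
    obtain ⟨F, hFpath, hFstep, hF0, hFL⟩ := extract π hπ
    obtain ⟨g, hgstep, hg0, hgL, hgdisj, hgcov⟩ := main_construct L F hFstep a.1 b.1 hF0 hFL
    refine ⟨fun j => pathOf D0 L (g j), ?_, disjTuple_pathOf D0 L g hgdisj, ?_⟩
    · intro j
      apply isDirPath_pathOf D0 L (g j) _ _ (hgstep j)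
      · rw [hpj j, hg0 j]
        simp only [Prod.mk.injEq]
        exact ⟨trivial, by omega⟩
      · rw [hqj j, hgL j]
        simp only [Prod.mk.injEq]
        exact ⟨trivial, by omega⟩
    · apply Finset.sum_le_sum_of_subset_of_nonneg _ (fun v _ _ => hA v)
      intro v hv
      rw [Finset.mem_biUnion] at hv ⊢
      obtain ⟨j, _, hvj⟩ := hv
      rw [hFpath j, List.mem_toFinset, mem_pathOf] at hvj
      obtain ⟨t, ht, rfl⟩ := hvj
      obtain ⟨i, hi⟩ := hgcov j t
      refine ⟨i, Finset.mem_univ i, ?_⟩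
      simp only [List.mem_toFinset]
      rw [mem_pathOf]
      exact ⟨t, ht, by rw [hi]⟩
  -- upper bound
  set W : ℝ := ∑ v ∈ Finset.Icc ((a.1, b.2) : ℤ × ℤ) ((b.1 + k, a.2 + k) : ℤ × ℤ), A v with hW
  have bound : ∀ (π : Fin k → List (ℤ × ℤ)), (∀ j, IsDirPath (π j) (p j) (q j)) →
      pathsUnionWeight A π ≤ W := by
    intro π hπ
    obtain ⟨F, hFpath, hFstep, hF0, hFL⟩ := extract π hπ
    apply Finset.sum_le_sum_of_subset_of_nonneg _ (fun v _ _ => hA v)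
    intro v hv
    rw [Finset.mem_biUnion] at hv
    obtain ⟨j, _, hvj⟩ := hv
    rw [hFpath j, List.mem_toFinset, mem_pathOf] at hvj
    obtain ⟨t, ht, rfl⟩ := hvj
    have hb1 := step_bound L (F j) (hFstep j) t ht 0 (Nat.zero_le _)
    have hb2 := step_bound L (F j) (hFstep j) L le_rfl t ht
    have hj0 := hF0 j
    have hjL := hFL j
    have hjk : ((j : ℕ) : ℤ) ≤ (k : ℤ) := by exact_mod_cast le_of_lt j.isLt
    have hjnn : (0 : ℤ) ≤ ((j : ℕ) : ℤ) := Int.natCast_nonneg _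
    have htL : (t : ℤ) ≤ (L : ℤ) := by exact_mod_cast ht
    have htnn : (0 : ℤ) ≤ (t : ℤ) := Int.natCast_nonneg _
    rw [Finset.mem_Icc]
    constructor
    · rw [Prod.mk_le_mk]
      constructor <;> omega
    · rw [Prod.mk_le_mk]
      constructor <;> omega
  -- canonical disjoint tuple
  have hcanon : ∃ π0 : Fin k → List (ℤ × ℤ), (∀ j, IsDirPath (π0 j) (p j) (q j)) ∧
      DisjTuple π0 := by
    set f0 : Fin k → ℕ → ℤ := fun j t => a.1 + (j : ℤ) + min (t : ℤ) (b.1 - a.1) with hf0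
    have hf0e : ∀ (j : Fin k) (t : ℕ), f0 j t = a.1 + (j : ℤ) + min (t : ℤ) (b.1 - a.1) :=
      fun _ _ => rfl
    refine ⟨fun j => pathOf D0 L (f0 j), ?_, disjTuple_pathOf D0 L f0 ?_⟩
    · intro j
      refine isDirPath_pathOf D0 L (f0 j) _ _ ?_ ?_ ?_
      · intro t ht
        rw [hf0e, hf0e]
        push_cast
        omega
      · rw [hpj j, hf0e]
        simp only [Prod.mk.injEq, Nat.cast_zero]
        constructor <;> omega
      · rw [hqj j, hf0e]
        simp only [Prod.mk.injEq]
        constructor <;> omega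
    · intro i j hij t
      have hne : ((i : ℕ) : ℤ) ≠ ((j : ℕ) : ℤ) := by
        exact_mod_cast fun h => hij (Fin.ext h)
      rw [hf0e, hf0e]
      omega
  obtain ⟨π0, hπ0, hπ0d⟩ := hcanon
  have hmem_dis : pathsUnionWeight A π0 ∈ {w : ℝ | ∃ π : Fin k → List (ℤ × ℤ),
      (∀ j, IsDirPath (π j) (p j) (q j)) ∧ DisjTuple π ∧ w = pathsUnionWeight A π} :=
    ⟨π0, hπ0, hπ0d, rfl⟩
  have hbdd_all : BddAbove {w : ℝ | ∃ π : Fin k → List (ℤ × ℤ),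
      (∀ j, IsDirPath (π j) (p j) (q j)) ∧ w = pathsUnionWeight A π} := by
    refine ⟨W, ?_⟩
    rintro w ⟨π, hπ, rfl⟩
    exact bound π hπ
  have hbdd_dis : BddAbove {w : ℝ | ∃ π : Fin k → List (ℤ × ℤ),
      (∀ j, IsDirPath (π j) (p j) (q j)) ∧ DisjTuple π ∧ w = pathsUnionWeight A π} := by
    refine ⟨W, ?_⟩
    rintro w ⟨π, hπ, _, rfl⟩
    exact bound π hπ
  apply le_antisymm
  · apply csSup_le_csSup hbdd_all ⟨_, hmem_dis⟩
    rintro w ⟨π, hπ, _, hw⟩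
    exact ⟨π, hπ, hw⟩
  · refine csSup_le ⟨pathsUnionWeight A π0, ⟨π0, hπ0, rfl⟩⟩ ?_
    rintro w ⟨π, hπ, rfl⟩
    obtain ⟨π', hπ'1, hπ'2, hπ'3⟩ := untangle π hπ
    exact le_csSup_of_le hbdd_dis ⟨π', hπ'1, hπ'2, rfl⟩ hπ'3
end

section
/- Let f : [0,∞)×{1,…,n} → ℝ have each coordinate cadlag with nonnegative jumps, and fix endpoints p = (x,n), q = (y,m) with x ≤ y, m ≤ n. Then the supremum over paths π from p to q of |π|_f = Σ_{i=m}^{n} (f_i(t_{i-1}) - f_i(t_i⁻)) is attained: there exists a geodesic. -/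
open Filter Set

/-- Left limit with the convention `f(0⁻) = 0`. -/
noncomputable def lml (f : ℝ → ℝ) (z : ℝ) : ℝ := if z ≤ 0 then 0 else Function.leftLim f z

/-- Cadlag on `[0, ∞)`: right-continuous at every `x ≥ 0`, left limits exist at every `x > 0`. -/
def Cadlag (f : ℝ → ℝ) : Prop :=
  (∀ x : ℝ, 0 ≤ x → ContinuousWithinAt f (Set.Ici x) x) ∧
  (∀ x : ℝ, 0 < x → ∃ l : ℝ, Filter.Tendsto f (nhdsWithin x (Set.Iio x)) (nhds l))

/-- All jumps are nonnegative (with the convention `f(0⁻) = 0`). -/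
def NonnegJumps (f : ℝ → ℝ) : Prop := ∀ z : ℝ, 0 ≤ z → lml f z ≤ f z

/-- `S f₁ f₂ x y = sup_{z ∈ [x,y]} (f₂ z - f₁ (z⁻))`. -/
noncomputable def S (f₁ f₂ : ℝ → ℝ) (x y : ℝ) : ℝ :=
  sSup ((fun z => f₂ z - lml f₁ z) '' Set.Icc x y)

/-- `Sm f₁ f₂ x y = sup_{z ∈ [x,y)} (f₂ z - f₁ (z⁻))`. -/
noncomputable def Sm (f₁ f₂ : ℝ → ℝ) (x y : ℝ) : ℝ :=
  sSup ((fun z => f₂ z - lml f₁ z) '' Set.Ico x y)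

/-- Jump times of a path from `(x, a)` (bottom line `a`) to `(y, b)` (top line `b ≤ a`):
`t a = x`, `t (b-1) = y`, and `t` is nonincreasing in the index on `[b-1, a]`. -/
def IsPathJT (a b : ℕ) (x y : ℝ) (t : ℕ → ℝ) : Prop :=
  t a = x ∧ t (b - 1) = y ∧ ∀ i : ℕ, b - 1 ≤ i → i < a → t (i + 1) ≤ t i

/-- Length of the path with jump times `t`: `∑_{i=b}^{a} (f_i(t_{i-1}) - f_i(t_i⁻))`. -/
noncomputable def pathLen (f : ℕ → ℝ → ℝ) (a b : ℕ) (t : ℕ → ℝ) : ℝ :=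
  ∑ i ∈ Finset.Icc b a, (f i (t (i - 1)) - lml (f i) (t i))

/-! Jump-time vectors with all entries in `[x, y]` form a compact subset of `ℕ → ℝ`, and
clamping the indices to `[b - 1, a]` turns every path into one of them of the same length.
Since all jumps are nonnegative, each `f i` is upper semicontinuous and its left limit
`lml (f i)` is lower semicontinuous on `[0, ∞)`, so the path length is upper semicontinuous
and attains its maximum on that compact set. -/

open Topology

lemma eventually_nhdsWithin_Ici_of_nhdsGE_of_nhdsLT {p : ℝ → Prop} {a z : ℝ} (hz : a ≤ z)
    (hge : ∀ᶠ w in 𝓝[≥] z, p w) (hlt : a < z → ∀ᶠ w in 𝓝[<] z, p w) :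
    ∀ᶠ w in 𝓝[Ici a] z, p w := by
  rcases hz.eq_or_lt with rfl | hz
  · exact hge
  · have hnhds : ∀ᶠ w in 𝓝 z, p w := by
      rw [← nhdsLT_sup_nhdsGE]
      exact eventually_sup.2 ⟨hlt hz, hge⟩
    exact nhdsWithin_le_nhds hnhds

namespace Cadlag

variable {g : ℝ → ℝ}

lemma tendsto_lml (hg : Cadlag g) {z : ℝ} (hz : 0 < z) :
    Tendsto g (𝓝[<] z) (𝓝 (lml g z)) := by
  obtain ⟨l, hl⟩ := hg.2 z hz
  rwa [lml, if_neg hz.not_ge, leftLim_eq_of_tendsto hl]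

lemma le_lml_of_forall_Ioo (hg : Cadlag g) {c u w : ℝ} (hw : 0 < w) (huw : u < w)
    (h : ∀ v ∈ Ioo u w, c ≤ g v) : c ≤ lml g w :=
  ge_of_tendsto (hg.tendsto_lml hw) (eventually_of_mem (Ioo_mem_nhdsLT huw) h)

lemma eventually_nhdsGT_lt_lml (hg : Cadlag g) {c z : ℝ} (hz : 0 ≤ z) (hc : c < g z) :
    ∀ᶠ w in 𝓝[>] z, c < lml g w := by
  obtain ⟨c', hcc', hc'⟩ := exists_between hc
  obtain ⟨u, hzu, hu⟩ :=
    mem_nhdsGE_iff_exists_Ico_subset.1 ((hg.1 z hz).eventually_const_lt hc')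
  filter_upwards [Ioo_mem_nhdsGT hzu] with w hw
  exact hcc'.trans_le <| hg.le_lml_of_forall_Ioo (hz.trans_lt hw.1) hw.1
    fun v hv => (hu ⟨hv.1.le, hv.2.trans hw.2⟩).le

lemma eventually_nhdsLT_lt_lml (hg : Cadlag g) {c z : ℝ} (hz : 0 < z) (hc : c < lml g z) :
    ∀ᶠ w in 𝓝[<] z, c < lml g w := by
  obtain ⟨c', hcc', hc'⟩ := exists_between hc
  obtain ⟨u, huz, hu⟩ :=
    mem_nhdsLT_iff_exists_Ioo_subset.1 ((hg.tendsto_lml hz).eventually_const_lt hc')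
  filter_upwards [Ioo_mem_nhdsLT (max_lt huz hz)] with w hw
  exact hcc'.trans_le <| hg.le_lml_of_forall_Ioo ((le_max_right _ _).trans_lt hw.1)
    ((le_max_left _ _).trans_lt hw.1) fun v hv => (hu ⟨hv.1, hv.2.trans hw.2⟩).le

lemma upperSemicontinuousOn (hg : Cadlag g) (hj : NonnegJumps g) :
    UpperSemicontinuousOn g (Ici 0) := fun z hz _ hc =>
  eventually_nhdsWithin_Ici_of_nhdsGE_of_nhdsLT hz ((hg.1 z hz).eventually_lt_const hc)
    fun hz' => (hg.tendsto_lml hz').eventually_lt_const ((hj z hz).trans_lt hc)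

lemma lowerSemicontinuousOn_lml (hg : Cadlag g) (hj : NonnegJumps g) :
    LowerSemicontinuousOn (lml g) (Ici 0) := by
  intro z hz c hc
  refine eventually_nhdsWithin_Ici_of_nhdsGE_of_nhdsLT hz ?_
    fun hz' => hg.eventually_nhdsLT_lt_lml hz' hc
  rw [← nhdsGT_sup_nhdsWithin_singleton, nhdsWithin_singleton]
  exact eventually_sup.2
    ⟨hg.eventually_nhdsGT_lt_lml hz (hc.trans_le (hj z hz)), eventually_pure.2 hc⟩

end Cadlag

section Paths

variable {a b : ℕ} {x y : ℝ} {t : ℕ → ℝ}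

lemma IsPathJT.antitoneOn (ht : IsPathJT a b x y t) : AntitoneOn t (Icc (b - 1) a) :=
  antitoneOn_of_succ_le ordConnected_Icc fun i _ hi hi' =>
    ht.2.2 i hi.1 (Order.succ_le_iff.1 hi'.2)

lemma IsPathJT.mem_Icc (ht : IsPathJT a b x y t) {i : ℕ} (hi : i ∈ Icc (b - 1) a) :
    t i ∈ Icc x y := by
  have hba : b - 1 ≤ a := hi.1.trans hi.2
  constructor
  · rw [← ht.1]
    exact ht.antitoneOn hi ⟨hba, le_rfl⟩ hi.2
  · rw [← ht.2.1]
    exact ht.antitoneOn ⟨le_rfl, hba⟩ hi hi.1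

lemma isClosed_setOf_isPathJT : IsClosed {t : ℕ → ℝ | IsPathJT a b x y t} := by
  refine (isClosed_eq (continuous_apply a) continuous_const).inter
    ((isClosed_eq (continuous_apply _) continuous_const).inter ?_)
  show IsClosed {t : ℕ → ℝ | ∀ i, b - 1 ≤ i → i < a → t (i + 1) ≤ t i}
  simp only [ofPred_forall]
  exact isClosed_iInter fun i => isClosed_iInter fun _ => isClosed_iInter fun _ =>
    isClosed_le (continuous_apply _) (continuous_apply _)

lemma exists_isPathJT_mem_pi_Icc (hba : b - 1 < a) (hxy : x ≤ y) :
    ∃ t : ℕ → ℝ, IsPathJT a b x y t ∧ t ∈ univ.pi fun _ => Icc x y := by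
  refine ⟨fun i => if i < a then y else x, ⟨by simp, by simp [hba], fun i _ _ => ?_⟩,
    fun i _ => ?_⟩ <;> beta_reduce <;> split_ifs <;> simp [hxy]

lemma IsPathJT.exists_mem_pi_Icc_pathLen_eq (hs : IsPathJT a b x y t) (hba : b - 1 ≤ a)
    (f : ℕ → ℝ → ℝ) :
    ∃ s : ℕ → ℝ, (IsPathJT a b x y s ∧ s ∈ univ.pi fun _ => Icc x y) ∧
      pathLen f a b s = pathLen f a b t := by
  have clamp_of_mem {i : ℕ} (hi : b - 1 ≤ i ∧ i ≤ a) : t (max (b - 1) (min i a)) = t i := by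
    rw [show max (b - 1) (min i a) = i by omega]
  refine ⟨fun i => t (max (b - 1) (min i a)), ⟨⟨?_, ?_, fun i hi hia => ?_⟩,
    fun i _ => hs.mem_Icc ⟨le_max_left _ _, max_le hba (min_le_right _ _)⟩⟩,
    Finset.sum_congr rfl fun i hi => ?_⟩
  · exact (clamp_of_mem ⟨hba, le_rfl⟩).trans hs.1
  · exact (clamp_of_mem ⟨le_rfl, hba⟩).trans hs.2.1
  · simpa only [clamp_of_mem ⟨hi, hia.le⟩, clamp_of_mem ⟨hi.trans i.le_succ, hia⟩]
      using hs.2.2 i hi hia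
  · rw [Finset.mem_Icc] at hi
    beta_reduce
    rw [clamp_of_mem ⟨by omega, by omega⟩, clamp_of_mem ⟨by omega, hi.2⟩]

end Paths

lemma upperSemicontinuousOn_pathLen {f : ℕ → ℝ → ℝ} {a b : ℕ}
    (hf : ∀ i ∈ Finset.Icc b a, Cadlag (f i) ∧ NonnegJumps (f i)) :
    UpperSemicontinuousOn (pathLen f a b) (univ.pi fun _ => Ici 0) := by
  refine upperSemicontinuousOn_sum fun i hi => ?_
  obtain ⟨hcad, hjmp⟩ := hf i hi
  have eval_mapsTo (j : ℕ) :
      MapsTo (fun s : ℕ → ℝ => s j) (univ.pi fun _ => Ici 0) (Ici 0) :=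
    fun s hs => hs j trivial
  have hlml :
      UpperSemicontinuousOn (fun s : ℕ → ℝ => -lml (f i) (s i)) (univ.pi fun _ => Ici 0) :=
    continuous_neg.comp_lowerSemicontinuousOn_antitone
      ((hcad.lowerSemicontinuousOn_lml hjmp).comp (continuous_apply i).continuousOn
        (eval_mapsTo i)) fun _ _ => neg_le_neg
  have hfi :
      UpperSemicontinuousOn (fun s : ℕ → ℝ => f i (s (i - 1))) (univ.pi fun _ => Ici 0) :=
    (hcad.upperSemicontinuousOn hjmp).comp (continuous_apply _).continuousOn (eval_mapsTo _)
  simpa only [sub_eq_add_neg] using hfi.add hlml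

theorem stmt15 (n a b : ℕ) (hb : 1 ≤ b) (hba : b ≤ a) (han : a ≤ n)
    (f : ℕ → ℝ → ℝ)
    (hcad : ∀ i : ℕ, 1 ≤ i → i ≤ n → Cadlag (f i))
    (hjmp : ∀ i : ℕ, 1 ≤ i → i ≤ n → NonnegJumps (f i))
    (x y : ℝ) (hx : 0 ≤ x) (hxy : x ≤ y) :
    ∃ t : ℕ → ℝ, IsPathJT a b x y t ∧
      ∀ s : ℕ → ℝ, IsPathJT a b x y s → pathLen f a b s ≤ pathLen f a b t := by
  set K := {t : ℕ → ℝ | IsPathJT a b x y t} ∩ univ.pi fun _ => Icc x y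
  have hK : IsCompact K := (isCompact_univ_pi fun _ => isCompact_Icc).inter_left
    isClosed_setOf_isPathJT
  have hKne : K.Nonempty := exists_isPathJT_mem_pi_Icc (a := a) (b := b) (by omega) hxy
  have hf : ∀ i ∈ Finset.Icc b a, Cadlag (f i) ∧ NonnegJumps (f i) := fun i hi => by
    rw [Finset.mem_Icc] at hi
    exact ⟨hcad i (by omega) (by omega), hjmp i (by omega) (by omega)⟩
  obtain ⟨t, ⟨ht, -⟩, htmax⟩ := ((upperSemicontinuousOn_pathLen hf).mono
    fun s hs i _ => hx.trans (hs.2 i trivial).1).exists_isMaxOn hKne hK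
  refine ⟨t, ht, fun s hs => ?_⟩
  obtain ⟨s', hs'K, hlen⟩ := hs.exists_mem_pi_Icc_pathLen_eq (by omega) f
  exact hlen ▸ htmax hs'K
end
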